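/- For a finite point set X with distinct pairwise distances and nearest-neighbor map N, define the undirected relation x ~ y iff N(x) = y or N(y) = x, and let components be the equivalence classes of its transitive-reflexive closure. Then every component contains exactly one mutual pair {a, b} with N(a) = b and N(b) = a. -/
import Mathlib


/-- Each weakly connected component of the 1-NN graph contains exactly one mutual
nearest-neighbor pair (its 'bi-root'). -/
theorem nng_unique_biroot {α : Type*} [MetricSpace α] (X : Finset α)
    (hcard : 2 ≤ X.card) (N : α → α)
    (hdistinct : ∀ a ∈ X, ∀ b ∈ X, ∀ c ∈ X, ∀ d ∈ X,
      a ≠ b → c ≠ d → dist a b = dist c d → ({a, b} : Set α) = {c, d})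
    (hNmem : ∀ x ∈ X, N x ∈ X) (hNne : ∀ x ∈ X, N x ≠ x)
    (hNmin : ∀ x ∈ X, ∀ z ∈ X, z ≠ x → dist x (N x) ≤ dist x z) :
    ∀ x ∈ X, ∃ a b : α, a ∈ X ∧ b ∈ X ∧ a ≠ b ∧ N a = b ∧ N b = a ∧
      Relation.ReflTransGen (fun u v => u ∈ X ∧ v ∈ X ∧ (N u = v ∨ N v = u)) x a ∧
      ∀ a' b' : α, a' ∈ X → b' ∈ X → a' ≠ b' → N a' = b' → N b' = a' →
        Relation.ReflTransGen (fun u v => u ∈ X ∧ v ∈ X ∧ (N u = v ∨ N v = u)) x a' →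
        (a' = a ∧ b' = b) ∨ (a' = b ∧ b' = a) := by
  intro x hx
  set R : α → α → Prop := fun u v => u ∈ X ∧ v = N u with hRdef
  set E : α → α → Prop := fun u v => u ∈ X ∧ v ∈ X ∧ (N u = v ∨ N v = u) with hEdef
  -- R-paths are E-paths
  have hRE : ∀ u v, Relation.ReflTransGen R u v → Relation.ReflTransGen E u v := by
    intro u v h
    induction h with
    | refl => exact .refl
    | tail _ h2 ih =>
      exact ih.tail ⟨h2.1, h2.2 ▸ hNmem _ h2.1, Or.inl h2.2.symm⟩
  -- strict decrease of NN distance along non-mutual steps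
  have hstrict : ∀ u ∈ X, N (N u) ≠ u → dist (N u) (N (N u)) < dist u (N u) := by
    intro u hu hNN
    have hNu := hNmem u hu
    have h1 : dist (N u) (N (N u)) ≤ dist (N u) u :=
      hNmin (N u) hNu u hu (Ne.symm (hNne u hu))
    rw [dist_comm (N u) u] at h1
    rcases lt_or_eq_of_le h1 with h | h
    · exact h
    · exfalso
      have hset := hdistinct (N u) hNu (N (N u)) (hNmem _ hNu) u hu (N u) hNu
        (Ne.symm (hNne _ hNu)) (Ne.symm (hNne u hu)) h
      have : N (N u) ∈ ({u, N u} : Set α) := by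
        rw [← hset]; exact Or.inr rfl
      rcases this with h2 | h2
      · exact hNN h2
      · exact hNne (N u) hNu h2
  -- measure
  set m : α → ℕ := fun u => (X.filter (fun y => dist y (N y) < dist u (N u))).card with hm
  have hmlt : ∀ u ∈ X, N (N u) ≠ u → m (N u) < m u := by
    intro u hu hNN
    apply Finset.card_lt_card
    constructor
    · intro y hy
      simp only [Finset.mem_filter] at hy ⊢
      exact ⟨hy.1, hy.2.trans (hstrict u hu hNN)⟩
    · intro hsub
      have h1 : N u ∈ X.filter (fun y => dist y (N y) < dist u (N u)) := by
        simp only [Finset.mem_filter]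
        exact ⟨hNmem u hu, hstrict u hu hNN⟩
      have h2 := hsub h1
      simp only [Finset.mem_filter] at h2
      exact lt_irrefl _ h2.2
  -- existence of a mutual pair reachable by iterating N
  have hex : ∀ n : ℕ, ∀ u ∈ X, m u ≤ n →
      ∃ a, a ∈ X ∧ N (N a) = a ∧ Relation.ReflTransGen R u a := by
    intro n
    induction n with
    | zero =>
      intro u hu hmu
      by_cases h : N (N u) = u
      · exact ⟨u, hu, h, .refl⟩
      · exact absurd (hmlt u hu h) (by omega)
    | succ n ih =>
      intro u hu hmu
      by_cases h : N (N u) = u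
      · exact ⟨u, hu, h, .refl⟩
      · obtain ⟨a, ha, hmut, hreach⟩ := ih (N u) (hNmem u hu)
          (by have := hmlt u hu h; omega)
        exact ⟨a, ha, hmut, .head ⟨hu, rfl⟩ hreach⟩
  have hRU : Relator.RightUnique R := by
    rintro a b c ⟨_, rfl⟩ ⟨_, rfl⟩; rfl
  -- absorption: once at a mutual pair, N-iteration stays in the pair
  have habsorb : ∀ a, N (N a) = a → ∀ c, Relation.ReflTransGen R a c → c = a ∨ c = N a := by
    intro a hmut c h
    induction h with
    | refl => exact Or.inl rfl
    | tail _ h2 ih =>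
      rcases ih with rfl | rfl
      · exact Or.inr h2.2
      · rw [h2.2]; exact Or.inl hmut
  -- uniqueness of mutual pair on one orbit
  have horb : ∀ u a c, N (N a) = a → N (N c) = c →
      Relation.ReflTransGen R u a → Relation.ReflTransGen R u c → c = a ∨ c = N a := by
    intro u a c hma hmc h1 h2
    rcases Relation.ReflTransGen.total_of_right_unique hRU h1 h2 with h | h
    · exact habsorb a hma c h
    · rcases habsorb c hmc a h with rfl | rfl
      · exact Or.inl rfl
      · exact Or.inr hmc.symm
  -- one E-step preserves the orbit's mutual pair
  have hEstep : ∀ u v, E u v → ∀ a, a ∈ X → N (N a) = a → Relation.ReflTransGen R u a →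
      ∃ c, c ∈ X ∧ N (N c) = c ∧ Relation.ReflTransGen R v c ∧ (c = a ∨ c = N a) := by
    rintro u v ⟨hu, hv, huv | hvu⟩
    · intro a ha hma hreach
      obtain ⟨c, hc, hmc, hcr⟩ := hex (m v) v hv le_rfl
      refine ⟨c, hc, hmc, hcr, ?_⟩
      exact horb u a c hma hmc hreach (.head ⟨hu, huv.symm⟩ hcr)
    · intro a ha hma hreach
      exact ⟨a, ha, hma, .head ⟨hv, hvu.symm⟩ hreach, Or.inl rfl⟩
  -- main existence from x
  obtain ⟨a, ha, hma, hra⟩ := hex (m x) x hx le_rfl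
  refine ⟨a, N a, ha, hNmem a ha, Ne.symm (hNne a ha), rfl, hma, hRE x a hra, ?_⟩
  -- invariance along E-paths
  have hinv : ∀ v, Relation.ReflTransGen E x v →
      ∃ c, c ∈ X ∧ N (N c) = c ∧ Relation.ReflTransGen R v c ∧ (c = a ∨ c = N a) := by
    intro v h
    induction h with
    | refl => exact ⟨a, ha, hma, hra, Or.inl rfl⟩
    | tail h1 h2 ih =>
      obtain ⟨c, hc, hmc, hcr, hcase⟩ := ih
      obtain ⟨c', hc', hmc', hcr', hcase'⟩ := hEstep _ _ h2 c hc hmc hcr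
      refine ⟨c', hc', hmc', hcr', ?_⟩
      rcases hcase' with rfl | rfl
      · exact hcase
      · rcases hcase with rfl | rfl
        · exact Or.inr rfl
        · exact Or.inl hma
  intro a' b' ha' hb' hne hab' hba' hreach'
  obtain ⟨c, hc, hmc, hcr, hcase⟩ := hinv a' hreach'
  have hma' : N (N a') = a' := by rw [hab', hba']
  have h1 : a' = a ∨ a' = N a := by
    rcases habsorb a' hma' c hcr with rfl | rfl
    · exact hcase
    · rcases hcase with h | h
      · exact Or.inr (by rw [← h, hma'])
      · have : N (N a') = N (N a) := by rw [h]
        rw [hma', hma] at this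
        exact Or.inl this
  rcases h1 with rfl | rfl
  · exact Or.inl ⟨rfl, hab'.symm⟩
  · exact Or.inr ⟨rfl, by rw [← hab', hma]⟩
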